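/- In GL(2, ℤ₂), let G_{2,a} = ⟨−Id, 3·Id, [[1,2],[−2,1]]⟩, G_{4,a} = ⟨5·Id, [[1,2],[−2,1]]⟩ and G_{4,b} = ⟨5·Id, [[−1,−2],[2,−1]]⟩ be the closed subgroups topologically generated by the indicated matrices, and set c₁ = diag(1,−1) and c₁′ = [[0,1],[1,0]]. Then ⟨G_{2,a}, c₁⟩ = ⟨G_{4,a}, c₁, −Id⟩ = ⟨G_{4,b}, c₁, −Id⟩ and ⟨G_{2,a}, c₁′⟩ = ⟨G_{4,a}, c₁′, −Id⟩ = ⟨G_{4,b}, c₁′, −Id⟩; moreover −Id ∈ ⟨G_{2,a}, c₁⟩ while −Id ∉ ⟨G_{4,a}, c₁⟩ and −Id ∉ ⟨G_{4,b}, c₁⟩. -/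
import Mathlib


open scoped MatrixGroups

/-- The closed subgroup of `GL(2, ℤ₂)` topologically generated by the elements whose
underlying matrices lie in the set `S` of matrices. -/
noncomputable def clGen (S : Set (Matrix (Fin 2) (Fin 2) ℤ_[2])) : Subgroup (GL (Fin 2) ℤ_[2]) :=
  (Subgroup.closure
    {g : GL (Fin 2) ℤ_[2] | (g : Matrix (Fin 2) (Fin 2) ℤ_[2]) ∈ S}).topologicalClosure

/-- The closed subgroup of `GL(2, ℤ₂)` topologically generated by a subgroup `X` together
with a set `T` of elements. -/
noncomputable def tjoin (X : Subgroup (GL (Fin 2) ℤ_[2])) (T : Set (GL (Fin 2) ℤ_[2])) :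
    Subgroup (GL (Fin 2) ℤ_[2]) :=
  (X ⊔ Subgroup.closure T).topologicalClosure

/-- The involution `c₁ = diag(1,−1)` in `GL(2, ℤ₂)`. -/
noncomputable def c1 : GL (Fin 2) ℤ_[2] :=
  ⟨!![1, 0; 0, -1], !![1, 0; 0, -1],
    by ext i j; fin_cases i <;> fin_cases j <;> simp [Matrix.mul_apply, Fin.sum_univ_succ],
    by ext i j; fin_cases i <;> fin_cases j <;> simp [Matrix.mul_apply, Fin.sum_univ_succ]⟩

/-- The involution `c₁′ = [[0,1],[1,0]]` in `GL(2, ℤ₂)`. -/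
noncomputable def c1' : GL (Fin 2) ℤ_[2] :=
  ⟨!![0, 1; 1, 0], !![0, 1; 1, 0],
    by ext i j; fin_cases i <;> fin_cases j <;> simp [Matrix.mul_apply, Fin.sum_univ_succ],
    by ext i j; fin_cases i <;> fin_cases j <;> simp [Matrix.mul_apply, Fin.sum_univ_succ]⟩

/-- `G_{2,a} = ⟨−Id, 3·Id, [[1,2],[−2,1]]⟩` (topologically generated). -/
noncomputable def G2a : Subgroup (GL (Fin 2) ℤ_[2]) :=
  clGen {(-1 : Matrix (Fin 2) (Fin 2) ℤ_[2]), (3 : Matrix (Fin 2) (Fin 2) ℤ_[2]),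
    !![1, 2; -2, 1]}

/-- `G_{4,a} = ⟨5·Id, [[1,2],[−2,1]]⟩` (topologically generated). -/
noncomputable def G4a : Subgroup (GL (Fin 2) ℤ_[2]) :=
  clGen {(5 : Matrix (Fin 2) (Fin 2) ℤ_[2]), !![1, 2; -2, 1]}

/-- `G_{4,b} = ⟨5·Id, [[−1,−2],[2,−1]]⟩` (topologically generated). -/
noncomputable def G4b : Subgroup (GL (Fin 2) ℤ_[2]) :=
  clGen {(5 : Matrix (Fin 2) (Fin 2) ℤ_[2]), !![-1, -2; 2, -1]}


/- ===================== auxiliary development ===================== -/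

abbrev M2 := Matrix (Fin 2) (Fin 2) ℤ_[2]
abbrev GL2 := GL (Fin 2) ℤ_[2]
abbrev M4 := Matrix (Fin 2) (Fin 2) (ZMod (2^2))
abbrev GL4 := GL (Fin 2) (ZMod (2^2))

lemma norm_five : ‖(5:ℤ_[2])‖ = 1 := by
  have h2 : ¬ ‖((5:ℤ):ℤ_[2])‖ < 1 := by
    rw [PadicInt.norm_int_lt_one_iff_dvd]; decide
  push_cast at h2
  linarith [PadicInt.norm_le_one (5:ℤ_[2])]

lemma norm_nthree : ‖(-3:ℤ_[2])‖ = 1 := by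
  have h2 : ¬ ‖((-3:ℤ):ℤ_[2])‖ < 1 := by
    rw [PadicInt.norm_int_lt_one_iff_dvd]; decide
  push_cast at h2
  linarith [PadicInt.norm_le_one (-3:ℤ_[2])]

noncomputable def z5 : ℤ_[2]ˣ := (PadicInt.isUnit_iff.mpr norm_five).unit
noncomputable def z3 : ℤ_[2]ˣ := (PadicInt.isUnit_iff.mpr norm_nthree).unit

@[simp] lemma z5_val : (z5 : ℤ_[2]) = 5 := rfl
@[simp] lemma z3_val : (z3 : ℤ_[2]) = -3 := rfl

noncomputable def sclr : ℤ_[2]ˣ →* GL2 :=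
  Units.map (algebraMap ℤ_[2] M2).toMonoidHom

noncomputable def u5 : GL2 := sclr z5
noncomputable def u3 : GL2 := sclr z3

lemma u5_val : (u5 : M2) = (5 : M2) := by
  show algebraMap ℤ_[2] M2 (z5 : ℤ_[2]) = _
  rw [z5_val, map_ofNat]

lemma u3_val : (u3 : M2) = -(3 : M2) := by
  show algebraMap ℤ_[2] M2 (z3 : ℤ_[2]) = _
  rw [z3_val, map_neg, map_ofNat]

lemma isUnit_A : IsUnit (!![1, 2; -2, 1] : M2) := by
  rw [Matrix.isUnit_iff_isUnit_det]
  have : (!![1, 2; -2, 1] : M2).det = 5 := by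
    simp [Matrix.det_fin_two_of]; ring
  rw [this]
  exact PadicInt.isUnit_iff.mpr norm_five

lemma isUnit_AT : IsUnit (!![1, -2; 2, 1] : M2) := by
  rw [Matrix.isUnit_iff_isUnit_det]
  have : (!![1, -2; 2, 1] : M2).det = 5 := by
    simp [Matrix.det_fin_two_of]; ring
  rw [this]
  exact PadicInt.isUnit_iff.mpr norm_five

noncomputable def uA : GL2 := isUnit_A.unit
noncomputable def uAT : GL2 := isUnit_AT.unit

@[simp] lemma uA_val : (uA : M2) = !![1, 2; -2, 1] := rfl
@[simp] lemma uAT_val : (uAT : M2) = !![1, -2; 2, 1] := rfl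

lemma five_eq : (5 : M2) = !![5,0;0,5] := by
  have : (5 : M2) = ((5:ℕ) : M2) := by norm_cast
  rw [this, ← Matrix.diagonal_natCast]
  ext i j; fin_cases i <;> fin_cases j <;> simp [Matrix.diagonal]

lemma three_eq : (3 : M2) = !![3,0;0,3] := by
  have : (3 : M2) = ((3:ℕ) : M2) := by norm_cast
  rw [this, ← Matrix.diagonal_natCast]
  ext i j; fin_cases i <;> fin_cases j <;> simp [Matrix.diagonal]

lemma neg_one_eq : (-1 : M2) = !![-1,0;0,-1] := by
  ext i j; fin_cases i <;> fin_cases j <;> simp [Matrix.neg_apply, Matrix.one_apply]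

lemma uA_mul_uAT : uA * uAT = u5 := by
  apply Units.ext
  show (uA : M2) * (uAT : M2) = (u5 : M2)
  rw [u5_val, five_eq, uA_val, uAT_val]
  ext i j; fin_cases i <;> fin_cases j <;>
    simp [Matrix.mul_apply, Fin.sum_univ_succ] <;> ring

lemma isClosed_tjoin (X : Subgroup GL2) (T : Set GL2) : IsClosed ((tjoin X T : Subgroup GL2) : Set GL2) :=
  Subgroup.isClosed_topologicalClosure _

lemma le_tjoin_left (X : Subgroup GL2) (T : Set GL2) : X ≤ tjoin X T :=
  le_trans le_sup_left (Subgroup.le_topologicalClosure _)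

lemma subset_tjoin (X : Subgroup GL2) (T : Set GL2) : T ⊆ (tjoin X T : Set GL2) :=
  fun g hg => (le_trans le_sup_right (Subgroup.le_topologicalClosure _))
    (Subgroup.subset_closure hg)

lemma tjoin_le {X : Subgroup GL2} {T : Set GL2} {H : Subgroup GL2}
    (hH : IsClosed (H : Set GL2)) (h1 : X ≤ H) (h2 : T ⊆ H) : tjoin X T ≤ H :=
  Subgroup.topologicalClosure_minimal _ (sup_le h1 ((Subgroup.closure_le H).2 h2)) hH

lemma clGen_le {S : Set M2} {H : Subgroup GL2}
    (hH : IsClosed (H : Set GL2)) (h : ∀ g : GL2, (g : M2) ∈ S → g ∈ H) : clGen S ≤ H :=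
  Subgroup.topologicalClosure_minimal _ ((Subgroup.closure_le H).2 h) hH

lemma mem_clGen {S : Set M2} {g : GL2} (h : (g : M2) ∈ S) : g ∈ clGen S :=
  Subgroup.le_topologicalClosure _ (Subgroup.subset_closure h)

lemma five_pow_two_pow (n : ℕ) : ∃ u : ℤ, Odd u ∧ (5:ℤ)^(2^n) = 1 + 2^(n+2) * u := by
  induction n with
  | zero => exact ⟨1, odd_one, by norm_num⟩
  | succ n ih =>
    obtain ⟨u, hu, h⟩ := ih
    refine ⟨u + 2^(n+1) * u^2, ?_, ?_⟩
    · rcases hu with ⟨m, hm⟩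
      exact ⟨m + 2^n * u^2, by subst hm; ring⟩
    · have : (5:ℤ)^(2^(n+1)) = ((5:ℤ)^(2^n))^2 := by
        rw [← pow_mul]; ring_nf
      rw [this, h]; ring

lemma key' (n : ℕ) : ∃ k : ℕ, (2:ℤ)^(n+2) ∣ 5^k + 3 := by
  induction n with
  | zero => exact ⟨0, by norm_num⟩
  | succ n ih =>
    obtain ⟨k, m, hm⟩ := ih
    rcases Int.even_or_odd m with ⟨t, ht⟩ | hodd
    · exact ⟨k, t, by rw [hm, ht]; ring⟩
    · obtain ⟨u, hu, h5⟩ := five_pow_two_pow n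
      refine ⟨k + 2^n, ?_⟩
      have expand : (5:ℤ)^(k + 2^n) + 3 = (5^k + 3) + 5^k * (5^(2^n) - 1) := by
        rw [pow_add]; ring
      have hodd5 : Odd ((5:ℤ)^k) := Odd.pow (by decide)
      obtain ⟨t, ht⟩ : Even (m + 5^k * u) := hodd.add_odd (hodd5.mul hu)
      refine ⟨t, ?_⟩
      have : (5:ℤ)^(k + 2^n) + 3 = 2^(n+2) * (m + 5^k * u) := by
        rw [expand, hm, h5]; ring
      rw [this, ht]; ring

lemma continuous_algebraMap_M2 : Continuous (fun x : ℤ_[2] => algebraMap ℤ_[2] M2 x) := by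
  apply continuous_matrix
  intro i j
  simp only [Matrix.algebraMap_matrix_apply]
  by_cases h : i = j
  · simp [h]; exact continuous_id
  · simp [h]; exact continuous_const

lemma u5_pow (k : ℕ) : u5 ^ k = sclr (z5 ^ k) := (map_pow sclr z5 k).symm

lemma norm_bound (n k : ℕ) (h : (2:ℤ)^(n+2) ∣ 5^k + 3) :
    ‖(5:ℤ_[2])^k - (-3)‖ ≤ ((2:ℝ)⁻¹)^n := by
  have : ((5:ℤ_[2])^k - (-3)) = (((5^k + 3 : ℤ)) : ℤ_[2]) := by push_cast; ring
  rw [this]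
  have hb := (PadicInt.norm_int_le_pow_iff_dvd (p := 2) (k := 5^k+3) (n := n+2)).mpr h
  refine le_trans hb ?_
  rw [zpow_neg, zpow_natCast, inv_pow]
  apply inv_anti₀ (by positivity)
  apply pow_le_pow_right₀ (by norm_num)
  omega

lemma units_inv_norm_bound (x y : ℤ_[2]ˣ) :
    ‖((x⁻¹ : ℤ_[2]ˣ) : ℤ_[2]) - ((y⁻¹ : ℤ_[2]ˣ) : ℤ_[2])‖ = ‖(y : ℤ_[2]) - (x : ℤ_[2])‖ := by
  have hx : (x : ℤ_[2]) * ((x⁻¹ : ℤ_[2]ˣ) : ℤ_[2]) = 1 := by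
    rw [← Units.val_mul, mul_inv_cancel, Units.val_one]
  have hy : (y : ℤ_[2]) * ((y⁻¹ : ℤ_[2]ˣ) : ℤ_[2]) = 1 := by
    rw [← Units.val_mul, mul_inv_cancel, Units.val_one]
  have key : ((x⁻¹ : ℤ_[2]ˣ) : ℤ_[2]) - ((y⁻¹ : ℤ_[2]ˣ) : ℤ_[2]) =
      ((x⁻¹ : ℤ_[2]ˣ) : ℤ_[2]) * ((y : ℤ_[2]) - (x : ℤ_[2])) * ((y⁻¹ : ℤ_[2]ˣ) : ℤ_[2]) := by
    linear_combination ((y⁻¹ : ℤ_[2]ˣ) : ℤ_[2]) * hx - ((x⁻¹ : ℤ_[2]ˣ) : ℤ_[2]) * hy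
  rw [key, norm_mul, norm_mul, PadicInt.norm_units, PadicInt.norm_units,
    one_mul, mul_one]

open Filter in
lemma u3_mem {R : Subgroup GL2} (hR : IsClosed (R : Set GL2)) (h5 : u5 ∈ R) : u3 ∈ R := by
  choose k hk using key'
  have bound5 : ∀ n, ‖(5:ℤ_[2])^(k n) - (-3)‖ ≤ ((2:ℝ)⁻¹)^n := fun n => norm_bound n (k n) (hk n)
  -- tendsto of values
  have hzero : Tendsto (fun n : ℕ => ((2:ℝ)⁻¹)^n) atTop (nhds 0) := by
    apply tendsto_pow_atTop_nhds_zero_of_lt_one <;> norm_num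
  have ta : Tendsto (fun n => ((z5 ^ (k n) : ℤ_[2]ˣ) : ℤ_[2])) atTop (nhds ((z3 : ℤ_[2]ˣ) : ℤ_[2])) := by
    rw [tendsto_iff_dist_tendsto_zero]
    apply squeeze_zero (fun n => dist_nonneg) (g := fun n : ℕ => ((2:ℝ)⁻¹)^n) _ hzero
    intro n
    rw [dist_eq_norm]
    simpa using bound5 n
  have tb : Tendsto (fun n => (((z5 ^ (k n))⁻¹ : ℤ_[2]ˣ) : ℤ_[2])) atTop
      (nhds ((z3⁻¹ : ℤ_[2]ˣ) : ℤ_[2])) := by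
    rw [tendsto_iff_dist_tendsto_zero]
    apply squeeze_zero (fun n => dist_nonneg) (g := fun n : ℕ => ((2:ℝ)⁻¹)^n) _ hzero
    intro n
    rw [dist_eq_norm, units_inv_norm_bound (z5 ^ (k n)) z3]
    have : ((z3 : ℤ_[2]ˣ) : ℤ_[2]) - ((z5 ^ (k n) : ℤ_[2]ˣ) : ℤ_[2]) =
        -((5:ℤ_[2])^(k n) - (-3)) := by
      push_cast
      simp only [z5_val, z3_val]
      ring
    rw [this, norm_neg]
    exact bound5 n
  -- tendsto in GL2
  have main : Tendsto (fun n => u5 ^ (k n)) atTop (nhds u3) := by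
    rw [Units.isEmbedding_embedProduct.tendsto_nhds_iff]
    have heq : (Units.embedProduct M2) ∘ (fun n => u5 ^ (k n)) =
        fun n => ((algebraMap ℤ_[2] M2 ((z5 ^ (k n) : ℤ_[2]ˣ) : ℤ_[2]),
          MulOpposite.op (algebraMap ℤ_[2] M2 (((z5 ^ (k n))⁻¹ : ℤ_[2]ˣ) : ℤ_[2])))) := by
      funext n
      simp only [Function.comp_apply, u5_pow]
      rfl
    rw [heq]
    have htarget : Units.embedProduct M2 u3 =
        (algebraMap ℤ_[2] M2 ((z3 : ℤ_[2]ˣ) : ℤ_[2]),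
          MulOpposite.op (algebraMap ℤ_[2] M2 ((z3⁻¹ : ℤ_[2]ˣ) : ℤ_[2]))) := rfl
    rw [htarget]
    exact Tendsto.prodMk_nhds (continuous_algebraMap_M2.continuousAt.tendsto.comp ta)
      ((MulOpposite.continuous_op.comp continuous_algebraMap_M2).continuousAt.tendsto.comp tb)
  exact hR.mem_of_tendsto main (Eventually.of_forall fun n => pow_mem h5 (k n))

def mkInv (m : M4) (h : m * m = 1) : GL4 := ⟨m, m, h, h⟩
def ka : GL4 := mkInv !![1,2;2,1] (by decide)
def kc : GL4 := mkInv !![1,0;0,3] (by decide)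
def kb : GL4 := mkInv !![3,2;2,3] (by decide)

def kleinA : Subgroup GL4 where
  carrier := {1, ka, kc, ka*kc}
  one_mem' := by simp
  mul_mem' := by
    intro x y hx hy
    simp only [Set.mem_insert_iff, Set.mem_singleton_iff] at hx hy ⊢
    rcases hx with rfl|rfl|rfl|rfl <;> rcases hy with rfl|rfl|rfl|rfl <;> decide
  inv_mem' := by
    intro x hx
    simp only [Set.mem_insert_iff, Set.mem_singleton_iff] at hx ⊢
    rcases hx with rfl|rfl|rfl|rfl <;> decide

def kleinB : Subgroup GL4 where
  carrier := {1, kb, kc, kb*kc}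
  one_mem' := by simp
  mul_mem' := by
    intro x y hx hy
    simp only [Set.mem_insert_iff, Set.mem_singleton_iff] at hx hy ⊢
    rcases hx with rfl|rfl|rfl|rfl <;> rcases hy with rfl|rfl|rfl|rfl <;> decide
  inv_mem' := by
    intro x hx
    simp only [Set.mem_insert_iff, Set.mem_singleton_iff] at hx ⊢
    rcases hx with rfl|rfl|rfl|rfl <;> decide

noncomputable def redh : M2 →+* M4 := (PadicInt.toZModPow 2).mapMatrix
noncomputable def π : GL2 →* GL4 := Units.map redh.toMonoidHom

lemma pi_val (g : GL2) : (π g : M4) = redh (g : M2) := rfl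

lemma isOpen_level (c : ZMod (2^2)) : IsOpen {x : ℤ_[2] | PadicInt.toZModPow 2 x = c} := by
  rw [Metric.isOpen_iff]
  intro x hx
  refine ⟨(2:ℝ)^(-2:ℤ), by positivity, ?_⟩
  intro y hy
  have h1 : ‖y - x‖ ≤ (2:ℝ)^(-(2:ℕ):ℤ) := by
    rw [Metric.mem_ball, dist_eq_norm] at hy
    exact le_of_lt (by exact_mod_cast hy)
  have h2 : (y - x) ∈ Ideal.span {(2:ℤ_[2])^(2:ℕ)} :=
    ((y - x).norm_le_pow_iff_mem_span_pow 2).mp (by exact_mod_cast h1)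
  have h3 : PadicInt.toZModPow 2 (y - x) = 0 := by
    rw [← RingHom.mem_ker, PadicInt.ker_toZModPow]
    exact h2
  have : PadicInt.toZModPow 2 y = PadicInt.toZModPow 2 x := by
    have := map_sub (PadicInt.toZModPow 2) y x
    rw [h3] at this
    linear_combination -this
  rw [Set.mem_setOf_eq, this, hx]

lemma isOpen_ker_pi : IsOpen ((π.ker : Subgroup GL2) : Set GL2) := by
  have hset : ((π.ker : Subgroup GL2) : Set GL2) =
      (Units.val) ⁻¹' {m : M2 | redh m = 1} := by
    ext g
    simp only [SetLike.mem_coe, MonoidHom.mem_ker, Set.mem_preimage, Set.mem_setOf_eq]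
    constructor
    · intro h; rw [← pi_val, h]; rfl
    · intro h; exact Units.ext h
  rw [hset]
  apply Units.continuous_val.isOpen_preimage
  have : {m : M2 | redh m = 1} = ⋂ i, ⋂ j, {m : M2 | PadicInt.toZModPow 2 (m i j) = (1 : M4) i j} := by
    ext m
    simp only [Set.mem_setOf_eq, Set.mem_iInter]
    constructor
    · intro h i j; rw [← h]; rfl
    · intro h; ext i j; exact h i j
  rw [this]
  exact isOpen_iInter_of_finite fun i => isOpen_iInter_of_finite fun j =>
    (isOpen_level ((1:M4) i j)).preimage (continuous_id.matrix_elem i j)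

lemma mem_kleinA {x : GL4} : x ∈ kleinA ↔ x = 1 ∨ x = ka ∨ x = kc ∨ x = ka*kc := by
  change x ∈ ({1, ka, kc, ka*kc} : Set GL4) ↔ _
  simp [Set.mem_insert_iff]

lemma mem_kleinB {x : GL4} : x ∈ kleinB ↔ x = 1 ∨ x = kb ∨ x = kc ∨ x = kb*kc := by
  change x ∈ ({1, kb, kc, kb*kc} : Set GL4) ↔ _
  simp [Set.mem_insert_iff]

-- scalar computations
lemma f0 : PadicInt.toZModPow 2 (0 : ℤ_[2]) = 0 := map_zero _
lemma f1 : PadicInt.toZModPow 2 (1 : ℤ_[2]) = 1 := map_one _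
lemma f2 : PadicInt.toZModPow 2 (2 : ℤ_[2]) = 2 := map_ofNat _ 2
lemma fn2 : PadicInt.toZModPow 2 (-2 : ℤ_[2]) = 2 := by
  have h : ((-2:ℤ):ℤ_[2]) = -2 := by push_cast; ring
  rw [← h, map_intCast]; decide
lemma fn1 : PadicInt.toZModPow 2 (-1 : ℤ_[2]) = 3 := by
  have h : ((-1:ℤ):ℤ_[2]) = -1 := by push_cast; ring
  rw [← h, map_intCast]; decide

-- images of units determined by val
lemma pi_eq {g : GL2} {u : GL4} (h : redh (g : M2) = (u : M4)) : π g = u :=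
  Units.ext h

lemma redh_entry (m : M2) (i j : Fin 2) : redh m i j = PadicInt.toZModPow 2 (m i j) := rfl

lemma redh_five : redh (5 : M2) = ((1 : GL4) : M4) := by
  rw [map_ofNat]; decide

lemma redh_A : redh !![1, 2; -2, 1] = (ka : M4) := by
  ext i j; fin_cases i <;> fin_cases j
  · exact f1
  · exact f2
  · exact fn2
  · exact f1

lemma redh_nA : redh !![-1, -2; 2, -1] = (kb : M4) := by
  ext i j; fin_cases i <;> fin_cases j
  · exact fn1
  · exact fn2
  · exact f2
  · exact fn1

lemma redh_c1 : redh !![1, 0; 0, -1] = (kc : M4) := by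
  ext i j; fin_cases i <;> fin_cases j
  · exact f1
  · exact f0
  · exact f0
  · exact fn1

lemma redh_neg_one : redh (-1 : M2) = ((-1 : GL4) : M4) := by
  have h1 : ((-1 : GL4) : M4) = -1 := rfl
  have h2 : redh (-1 : M2) = -(redh 1) := map_neg redh 1
  rw [h1, h2, map_one]


/- ===================== conjugation identities ===================== -/

lemma c1_conj : c1 * uA * c1⁻¹ = uAT := by
  apply Units.ext
  show ((c1:M2) * (uA:M2)) * c1.inv = (uAT:M2)
  ext i j; fin_cases i <;> fin_cases j <;>
    simp [c1, uA_val, uAT_val, Matrix.mul_apply, Fin.sum_univ_succ]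

lemma c1'_conj : c1' * uA * c1'⁻¹ = uAT := by
  apply Units.ext
  show ((c1':M2) * (uA:M2)) * c1'.inv = (uAT:M2)
  ext i j; fin_cases i <;> fin_cases j <;>
    simp [c1', uA_val, uAT_val, Matrix.mul_apply, Fin.sum_univ_succ]

/- ===================== canonical values ===================== -/

lemma neg_one_val : ((-1 : GL2) : M2) = (-1 : M2) := by simp

lemma neg_uA_val : ((-uA : GL2) : M2) = !![-1, -2; 2, -1] := by
  rw [Units.val_neg, uA_val]
  ext i j; fin_cases i <;> fin_cases j <;> simp

lemma three_elt_val : (((-1) * u3 : GL2) : M2) = (3 : M2) := by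
  rw [Units.val_mul, neg_one_val, u3_val, neg_mul_neg, one_mul]

/- ===================== membership of generators ===================== -/

lemma uA_mem_G4a : uA ∈ G4a := by
  apply mem_clGen; rw [uA_val]; right; rfl

lemma u5_mem_G4a : u5 ∈ G4a := by
  apply mem_clGen; rw [u5_val]; left; rfl

lemma u5_mem_G4b : u5 ∈ G4b := by
  apply mem_clGen; rw [u5_val]; left; rfl

lemma neg_uA_mem_G4b : -uA ∈ G4b := by
  apply mem_clGen; rw [neg_uA_val]; right; rfl

lemma uA_mem_G2a : uA ∈ G2a := by
  apply mem_clGen; rw [uA_val]; right; right; rfl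

lemma neg_one_mem_G2a : (-1 : GL2) ∈ G2a := by
  apply mem_clGen; rw [neg_one_val]; left; rfl

/- ===================== the equality lemma ===================== -/

lemma eq_main (c : GL2) (hc : c * uA * c⁻¹ = uAT) :
    tjoin G2a {c} = tjoin G4a {c, -1} ∧ tjoin G2a {c} = tjoin G4b {c, -1} := by
  have hc' : c * (-uA) * c⁻¹ = -uAT := by
    rw [mul_neg, neg_mul, hc]
  have hcL : ∀ T : Set GL2, c ∈ T → c ∈ tjoin G2a T := fun T hT => subset_tjoin _ _ hT
  -- u5 as a product
  have hu5a : u5 = uA * (c * uA * c⁻¹) := by rw [hc, uA_mul_uAT]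
  have hu5b : u5 = (-uA) * (c * (-uA) * c⁻¹) := by rw [hc', neg_mul_neg, uA_mul_uAT]
  -- left side contains everything
  set L := tjoin G2a {c} with hL
  have hcmem : c ∈ L := subset_tjoin _ _ rfl
  have huAL : uA ∈ L := le_tjoin_left _ _ uA_mem_G2a
  have hn1L : (-1 : GL2) ∈ L := le_tjoin_left _ _ neg_one_mem_G2a
  have hu5L : u5 ∈ L := by
    rw [hu5a]
    exact mul_mem huAL (mul_mem (mul_mem hcmem huAL) (inv_mem hcmem))
  -- common argument: G2a ≤ R
  have hG2a_le : ∀ R : Subgroup GL2, IsClosed (R : Set GL2) → u5 ∈ R → (-1:GL2) ∈ R →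
      uA ∈ R → G2a ≤ R := by
    intro R hRc h5R hn1R huAR
    apply clGen_le hRc
    intro g hg
    rcases hg with h | h | h
    · have : g = -1 := Units.ext (by rw [h, neg_one_val])
      rw [this]; exact hn1R
    · have : g = (-1) * u3 := Units.ext (by rw [h, three_elt_val])
      rw [this]
      exact mul_mem hn1R (u3_mem hRc h5R)
    · have : g = uA := Units.ext (by rw [h, uA_val])
      rw [this]; exact huAR
  constructor
  · apply le_antisymm
    · -- L ≤ tjoin G4a {c, -1}
      apply tjoin_le (isClosed_tjoin _ _)
      · apply hG2a_le _ (isClosed_tjoin _ _)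
        · exact le_tjoin_left _ _ u5_mem_G4a
        · exact subset_tjoin _ _ (by right; rfl)
        · exact le_tjoin_left _ _ uA_mem_G4a
      · intro x hx; rw [hx]
        exact subset_tjoin _ _ (by left; rfl)
    · -- tjoin G4a {c,-1} ≤ L
      apply tjoin_le (isClosed_tjoin _ _)
      · apply clGen_le (isClosed_tjoin _ _)
        intro g hg
        rcases hg with h | h
        · have : g = u5 := Units.ext (by rw [h, u5_val])
          rw [this]; exact hu5L
        · have : g = uA := Units.ext (by rw [h, uA_val])
          rw [this]; exact huAL
      · intro x hx
        rcases hx with h | h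
        · rw [h]; exact hcmem
        · rw [h]; exact hn1L
  · apply le_antisymm
    · apply tjoin_le (isClosed_tjoin _ _)
      · apply hG2a_le _ (isClosed_tjoin _ _)
        · exact le_tjoin_left _ _ u5_mem_G4b
        · exact subset_tjoin _ _ (by right; rfl)
        · have : uA = (-1) * (-uA) := by rw [neg_mul_neg, one_mul]
          rw [this]
          exact mul_mem (subset_tjoin _ _ (by right; rfl)) (le_tjoin_left _ _ neg_uA_mem_G4b)
      · intro x hx; rw [hx]
        exact subset_tjoin _ _ (by left; rfl)
    · apply tjoin_le (isClosed_tjoin _ _)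
      · apply clGen_le (isClosed_tjoin _ _)
        intro g hg
        rcases hg with h | h
        · have : g = u5 := Units.ext (by rw [h, u5_val])
          rw [this]; exact hu5L
        · have : g = -uA := Units.ext (by rw [h, neg_uA_val])
          rw [this, show (-uA : GL2) = (-1) * uA by rw [neg_one_mul]]
          exact mul_mem hn1L huAL
      · intro x hx
        rcases hx with h | h
        · rw [h]; exact hcmem
        · rw [h]; exact hn1L

/- ===================== non-membership ===================== -/

def kn1 : GL4 := mkInv !![3,0;0,3] (by decide)

lemma pi_neg_one : π (-1 : GL2) = kn1 := by
  apply pi_eq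
  rw [neg_one_val, redh_neg_one]
  decide

lemma kn1_not_kleinA : kn1 ∉ kleinA := by
  rw [mem_kleinA]; decide

lemma kn1_not_kleinB : kn1 ∉ kleinB := by
  rw [mem_kleinB]; decide

lemma HA_closed : IsClosed ((kleinA.comap π : Subgroup GL2) : Set GL2) := by
  apply Subgroup.isClosed_of_isOpen
  apply Subgroup.isOpen_mono (H₁ := π.ker) _ isOpen_ker_pi
  intro x hx
  rw [MonoidHom.mem_ker] at hx
  show π x ∈ kleinA
  rw [hx]; exact one_mem _

lemma HB_closed : IsClosed ((kleinB.comap π : Subgroup GL2) : Set GL2) := by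
  apply Subgroup.isClosed_of_isOpen
  apply Subgroup.isOpen_mono (H₁ := π.ker) _ isOpen_ker_pi
  intro x hx
  rw [MonoidHom.mem_ker] at hx
  show π x ∈ kleinB
  rw [hx]; exact one_mem _

lemma tjoinA_le_HA : tjoin G4a {c1} ≤ kleinA.comap π := by
  apply tjoin_le HA_closed
  · apply clGen_le HA_closed
    intro g hg
    rcases hg with h | h
    · have : π g = 1 := pi_eq (by rw [h, redh_five])
      show π g ∈ kleinA; rw [this]; exact one_mem _
    · have : π g = ka := pi_eq (by rw [h, redh_A])
      show π g ∈ kleinA; rw [this, mem_kleinA]; tauto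
  · intro x hx; rw [hx]
    have : π c1 = kc := pi_eq redh_c1
    show π c1 ∈ kleinA; rw [this, mem_kleinA]; tauto

lemma tjoinB_le_HB : tjoin G4b {c1} ≤ kleinB.comap π := by
  apply tjoin_le HB_closed
  · apply clGen_le HB_closed
    intro g hg
    rcases hg with h | h
    · have : π g = 1 := pi_eq (by rw [h, redh_five])
      show π g ∈ kleinB; rw [this]; exact one_mem _
    · have : π g = kb := pi_eq (by rw [h, redh_nA])
      show π g ∈ kleinB; rw [this, mem_kleinB]; tauto
  · intro x hx; rw [hx]
    have : π c1 = kc := pi_eq redh_c1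
    show π c1 ∈ kleinB; rw [this, mem_kleinB]; tauto


/-- In `GL(2, ℤ₂)`: `⟨G_{2,a}, c₁⟩ = ⟨G_{4,a}, c₁, −Id⟩ =
⟨G_{4,b}, c₁, −Id⟩` and `⟨G_{2,a}, c₁′⟩ = ⟨G_{4,a}, c₁′, −Id⟩ = ⟨G_{4,b}, c₁′, −Id⟩`;
moreover `−Id ∈ ⟨G_{2,a}, c₁⟩` while `−Id ∉ ⟨G_{4,a}, c₁⟩` and `−Id ∉ ⟨G_{4,b}, c₁⟩`. -/
theorem stmt_15 :
    (tjoin G2a {c1} = tjoin G4a {c1, -1} ∧ tjoin G2a {c1} = tjoin G4b {c1, -1}) ∧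
    (tjoin G2a {c1'} = tjoin G4a {c1', -1} ∧ tjoin G2a {c1'} = tjoin G4b {c1', -1}) ∧
    (-1 : GL (Fin 2) ℤ_[2]) ∈ tjoin G2a {c1} ∧
    (-1 : GL (Fin 2) ℤ_[2]) ∉ tjoin G4a {c1} ∧
    (-1 : GL (Fin 2) ℤ_[2]) ∉ tjoin G4b {c1} := by
  refine ⟨eq_main c1 c1_conj, eq_main c1' c1'_conj, ?_, ?_, ?_⟩
  · exact le_tjoin_left _ _ neg_one_mem_G2a
  · intro h
    have := tjoinA_le_HA h
    rw [Subgroup.mem_comap, pi_neg_one] at this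
    exact kn1_not_kleinA this
  · intro h
    have := tjoinB_le_HB h
    rw [Subgroup.mem_comap, pi_neg_one] at this
    exact kn1_not_kleinB this
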